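/- Being Wilder is a Whitney property: if X is a Wilder continuum, μ : C(X) → [0, μ(X)] is a Whitney map, and t ∈ (0, μ(X)), then the Whitney level μ⁻¹(t), regarded as a subspace of C(X) with the Hausdorff metric, is a Wilder continuum. -/

import Mathlib

open TopologicalSpace

/-- A topological space is *Wilder* if for any three distinct points `x, y, z` there is a
compact connected subset containing `x` and exactly one of `y` and `z`. -/
def WilderSpace (X : Type*) [TopologicalSpace X] : Prop :=
  ∀ x y z : X, x ≠ y → y ≠ z → x ≠ z →
    ∃ C : Set X, IsCompact C ∧ IsConnected C ∧ x ∈ C ∧ Xor' (y ∈ C) (z ∈ C)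

/-- The hyperspace `C(X)` of all subcontinua of `X`, i.e. nonempty compact connected
subsets, with the Hausdorff metric. -/
abbrev Hyperspace (X : Type*) [MetricSpace X] : Type _ :=
  {K : NonemptyCompacts X // IsConnected (K : Set X)}

/-!
A Whitney map `μ` is continuous and strictly monotone on the compact space `C(X)`, ordered by
inclusion, so the level `μ⁻¹(t)` is compact. By boundary bumping, a proper subcontinuum `C ⊊ A`
is a limit of subcontinua strictly between `C` and `A`. Maximising `μ` over compact families of
continua then gives an intermediate value property (between `K ≤ B` with `μ K ≤ t ≤ μ B` lies a
continuum of level `t`) and shows that the level-`t` continua between `K` and `B` form a connected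
set: were `u, v` a separation, a common lower bound `C` of both parts with maximal `μ` could be
bumped towards both parts, and a level-`t` continuum above the union of the two bumps would lie
in `u` or in `v`, contradicting maximality. Sorting the points of `B` by the part containing the
level-`t` continua through them, the level-`t` continua inside `B` form a connected set too.

Given three members `𝒜, ℬ, 𝒞` of the level, either some point of `𝒜` lies in exactly one of `ℬ`
and `𝒞`, and the level continua through it do the job, or the Wilder property of `X` yields a
continuum through points of `𝒜` and of `ℬ \ (𝒜 ∪ 𝒞)` missing a point of `𝒞 \ (𝒜 ∪ ℬ)` (or
the other way round), and the level continua inside its union with `𝒜` and `ℬ` do.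
-/

open Set Metric

section Topology

variable {Y : Type*} [TopologicalSpace Y]

theorem exists_isClopen_mem_disjoint_of_disjoint_connectedComponent [CompactSpace Y] [T2Space Y]
    {x : Y} {D : Set Y} (hD : IsClosed D) (h : Disjoint (connectedComponent x) D) :
    ∃ V, IsClopen V ∧ x ∈ V ∧ Disjoint V D := by
  rw [connectedComponent_eq_iInter_isClopen, disjoint_iff_inter_eq_empty, inter_comm] at h
  obtain ⟨u, hu⟩ := hD.isCompact.elim_finite_subfamily_closed _ (fun V => V.2.1.1) h
  refine ⟨⋂ V ∈ u, (V : Set Y), isClopen_biInter_finset fun V _ => V.2.1,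
    mem_iInter₂.2 fun V _ => V.2.2, ?_⟩
  rw [disjoint_iff_inter_eq_empty, inter_comm, hu]

theorem IsClosed.connectedComponentIn {F : Set Y} (hF : IsClosed F) (x : Y) :
    IsClosed (connectedComponentIn F x) := by
  by_cases hx : x ∈ F
  · refine closure_subset_iff_isClosed.1 <|
      isPreconnected_connectedComponentIn.closure.subset_connectedComponentIn
        (subset_closure (mem_connectedComponentIn hx)) ?_
    exact closure_minimal (connectedComponentIn_subset F x) hF
  · rw [connectedComponentIn_eq_empty hx]
    exact isClosed_empty

/-- The boundary bumping theorem. -/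
theorem connectedComponentIn_inter_frontier_nonempty [T2Space Y] {A G : Set Y}
    (hAc : IsCompact A) (hA : IsPreconnected A) (hG : IsClosed G) {x : Y} (hx : x ∈ A ∩ G)
    (hAG : ¬A ⊆ G) : (connectedComponentIn (A ∩ G) x ∩ frontier G).Nonempty := by
  have hF : IsCompact (A ∩ G) := hAc.inter_right hG
  have : CompactSpace ↥(A ∩ G) := isCompact_iff_compactSpace.1 hF
  by_contra hdisj
  rw [not_nonempty_iff_eq_empty, ← disjoint_iff_inter_eq_empty,
    connectedComponentIn_eq_image hx, disjoint_image_left] at hdisj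
  obtain ⟨V, hV, hxV, hVD⟩ := exists_isClopen_mem_disjoint_of_disjoint_connectedComponent
    (isClosed_frontier.preimage continuous_subtype_val) hdisj
  obtain ⟨O, hO, rfl⟩ := isOpen_induced_iff.1 hV.isOpen
  set W : Set Y := (↑) '' ((↑) ⁻¹' O : Set ↥(A ∩ G))
  have hW : IsClosed W := (hV.isClosed.isCompact.image continuous_subtype_val).isClosed
  have hcover : A ⊆ (O ∩ interior G) ∪ Wᶜ := by
    intro y hy
    by_cases hyW : y ∈ W
    · obtain ⟨⟨y, hyF⟩, hyO, rfl⟩ := hyW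
      refine Or.inl ⟨hyO, ?_⟩
      by_contra hyG
      exact disjoint_left.1 hVD hyO ⟨subset_closure hyF.2, hyG⟩
    · exact Or.inr hyW
  have hsplit : A ∩ ((O ∩ interior G) ∩ Wᶜ) = ∅ :=
    eq_empty_of_forall_notMem fun y ⟨hyA, ⟨hyO, hyG⟩, hyW⟩ =>
      hyW ⟨⟨y, hyA, interior_subset hyG⟩, hyO, rfl⟩
  rcases isPreconnected_iff_subset_of_disjoint.1 hA _ _ (hO.inter isOpen_interior)
    hW.isOpen_compl hcover hsplit with h | h
  · exact hAG (h.trans (inter_subset_right.trans interior_subset))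
  · exact h hx.1 ⟨⟨x, hx⟩, hxV, rfl⟩

end Topology

theorem IsCompact.isClosed_lowerClosure {α : Type*} [TopologicalSpace α] [Preorder α]
    [OrderClosedTopology α] {s : Set α} (hs : IsCompact s) : IsClosed (lowerClosure s : Set α) := by
  have : CompactSpace s := isCompact_iff_compactSpace.1 hs
  have h : (lowerClosure s : Set α) = Prod.fst '' {p : α × s | p.1 ≤ p.2} := by
    ext a
    simp [mem_lowerClosure]
  rw [h]
  exact isClosedMap_fst_of_compactSpace _
    (isClosed_le continuous_fst (continuous_subtype_val.comp continuous_snd))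

theorem StrictMono.eq_of_le_of_apply_eq {α β : Type*} [PartialOrder α] [Preorder β] {f : α → β}
    (hf : StrictMono f) {a b : α} (hab : a ≤ b) (h : f a = f b) : a = b :=
  hab.eq_of_not_lt fun hlt => (hf hlt).ne h

theorem wilderSpace_subtype {Y : Type*} [TopologicalSpace Y] {S : Set Y}
    (h : ∀ x ∈ S, ∀ y ∈ S, ∀ z ∈ S, x ≠ y → y ≠ z → x ≠ z →
      ∃ C ⊆ S, IsCompact C ∧ IsConnected C ∧ x ∈ C ∧ Xor (y ∈ C) (z ∈ C)) :
    WilderSpace S := by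
  rintro ⟨x, hx⟩ ⟨y, hy⟩ ⟨z, hz⟩ hxy hyz hxz
  obtain ⟨C, hCS, hC, hCconn, hxC, hyzC⟩ := h x hx y hy z hz (Subtype.coe_ne_coe.2 hxy)
    (Subtype.coe_ne_coe.2 hyz) (Subtype.coe_ne_coe.2 hxz)
  have himage : Subtype.val '' (Subtype.val ⁻¹' C : Set S) = C := by
    rw [Subtype.image_preimage_coe, inter_eq_self_of_subset_right hCS]
  refine ⟨Subtype.val ⁻¹' C, ?_, ?_, hxC, hyzC⟩
  · rw [Subtype.isCompact_iff, himage]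
    exact hC
  · refine ⟨⟨⟨x, hx⟩, hxC⟩, ?_⟩
    rw [← Topology.IsInducing.subtypeVal.isPreconnected_image, himage]
    exact hCconn.isPreconnected

namespace TopologicalSpace.NonemptyCompacts

variable {α : Type*} [TopologicalSpace α] [T2Space α]

instance : OrderClosedTopology (NonemptyCompacts α) where
  isClosed_le' := by
    simpa only [sup_eq_right] using
      isClosed_eq (continuous_sup (L := NonemptyCompacts α)) continuous_snd

theorem isClosed_setOf_isConnected :
    IsClosed {K : NonemptyCompacts α | IsConnected (K : Set α)} := by
  refine isOpen_compl_iff.1 (isOpen_iff_forall_mem_open.2 fun K hK => ?_)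
  have hK' : ¬IsPreconnected (K : Set α) := fun h => hK ⟨K.nonempty, h⟩
  simp only [isPreconnected_iff_subset_of_fully_disjoint_closed K.isCompact.isClosed, not_forall,
    not_or] at hK'
  obtain ⟨u, v, hu, hv, hKuv, huv, hKu, hKv⟩ := hK'
  obtain ⟨U, V, hU, hV, hKU, hKV, hUV⟩ := SeparatedNhds.of_isCompact_isCompact
    (K.isCompact.inter_right hu) (K.isCompact.inter_right hv)
    (huv.mono inter_subset_right inter_subset_right)
  refine ⟨{L | (L : Set α) ⊆ U ∪ V} ∩ {L | ((L : Set α) ∩ U).Nonempty} ∩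
    {L | ((L : Set α) ∩ V).Nonempty}, ?_, ?_, ?_⟩
  · rintro L ⟨⟨hLUV, ⟨x, hxL, hxU⟩⟩, ⟨y, hyL, hyV⟩⟩ hL
    rcases isPreconnected_iff_subset_of_disjoint.1 hL.2 U V hU hV hLUV
      (by rw [hUV.inter_eq, inter_empty]) with h | h
    · exact disjoint_left.1 hUV (h hyL) hyV
    · exact disjoint_left.1 hUV hxU (h hxL)
  · exact ((isOpen_subsets_of_isOpen (hU.union hV)).inter
      (isOpen_inter_nonempty_of_isOpen hU)).inter (isOpen_inter_nonempty_of_isOpen hV)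
  · obtain ⟨x, hxK, hxv⟩ := not_subset.1 hKv
    obtain ⟨y, hyK, hyu⟩ := not_subset.1 hKu
    refine ⟨⟨fun z hz => ?_, x, hxK, hKU ⟨hxK, (hKuv hxK).resolve_right hxv⟩⟩,
      y, hyK, hKV ⟨hyK, (hKuv hyK).resolve_left hyu⟩⟩
    rcases hKuv hz with h | h
    exacts [Or.inl (hKU ⟨hz, h⟩), Or.inr (hKV ⟨hz, h⟩)]

end TopologicalSpace.NonemptyCompacts

namespace Hyperspace

variable {X : Type*} [MetricSpace X]

instance [CompactSpace X] : CompactSpace (Hyperspace X) :=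
  isCompact_iff_compactSpace.1 NonemptyCompacts.isClosed_setOf_isConnected.isCompact

instance [CompactSpace X] [ConnectedSpace X] : OrderTop (Hyperspace X) where
  top := ⟨⊤, isConnected_univ⟩
  le_top K := subset_univ (K.1 : Set X)

instance : Singleton X (Hyperspace X) :=
  ⟨fun x => ⟨{x}, by rw [NonemptyCompacts.coe_singleton]; exact isConnected_singleton⟩⟩

theorem singleton_le_iff {x : X} {A : Hyperspace X} :
    ({x} : Hyperspace X) ≤ A ↔ x ∈ (A.1 : Set X) :=
  singleton_subset_iff

theorem continuous_singleton : Continuous fun x : X => ({x} : Hyperspace X) :=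
  NonemptyCompacts.continuous_singleton.subtype_mk _

def union (A B : Hyperspace X) (h : ((A.1 : Set X) ∩ B.1).Nonempty) : Hyperspace X :=
  ⟨A.1 ⊔ B.1, by rw [NonemptyCompacts.coe_sup]; exact A.2.union h B.2⟩

variable {A B C : Hyperspace X} {h : ((A.1 : Set X) ∩ B.1).Nonempty}

theorem le_union_left : A ≤ union A B h := le_sup_left (a := A.1)

theorem le_union_right : B ≤ union A B h := le_sup_right (a := A.1)

theorem union_le (hA : A ≤ C) (hB : B ≤ C) : union A B h ≤ C := sup_le (a := A.1) hA hB

theorem dist_union_le : dist (union A B h) C ≤ max (dist A C) (dist B C) := by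
  have := NonemptyCompacts.lipschitz_sup.dist_le_mul (A.1, B.1) (C.1, C.1)
  rwa [NNReal.coe_one, one_mul, sup_idem, Prod.dist_eq] at this

theorem mem_closure_Ioc (hCA : C < A) : C ∈ closure (Ioc C A) := by
  refine Metric.mem_closure_iff.2 fun ε hε => ?_
  obtain ⟨a, haA, haC⟩ := not_subset.1 hCA.not_ge
  have ha : 0 < infDist a (C.1 : Set X) :=
    (C.1.isCompact.isClosed.notMem_iff_infDist_pos C.1.nonempty).1 haC
  set δ := min (ε / 2) (infDist a (C.1 : Set X) / 2)
  have hδ : 0 < δ := lt_min (half_pos hε) (half_pos ha)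
  set G := {y | infDist y (C.1 : Set X) ≤ δ}
  have hCG : (C.1 : Set X) ⊆ G := fun y hy => (infDist_zero_of_mem hy).trans_le hδ.le
  have hAG : ¬(A.1 : Set X) ⊆ G := fun h =>
    (h haA).not_gt ((min_le_right _ _).trans_lt (half_lt_self ha))
  obtain ⟨x, hx⟩ := C.1.nonempty
  set Z := connectedComponentIn ((A.1 : Set X) ∩ G) x
  have hG : IsClosed G := isClosed_le (continuous_infDist_pt _) continuous_const
  obtain ⟨y, hyZ, hyG⟩ := connectedComponentIn_inter_frontier_nonempty A.1.isCompact
    A.2.isPreconnected hG ⟨hCA.le hx, hCG hx⟩ hAG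
  have hZ : IsCompact Z := A.1.isCompact.of_isClosed_subset
    ((A.1.isCompact.isClosed.inter hG).connectedComponentIn x)
    ((connectedComponentIn_subset _ _).trans inter_subset_left)
  have hCZ : (C.1 : Set X) ⊆ Z :=
    C.2.isPreconnected.subset_connectedComponentIn hx (subset_inter hCA.le hCG)
  let Z' : Hyperspace X :=
    ⟨⟨⟨Z, hZ⟩, ⟨x, hCZ hx⟩⟩, ⟨x, hCZ hx⟩, isPreconnected_connectedComponentIn⟩
  have hyC : y ∉ (C.1 : Set X) := fun hyC => by
    have : infDist y (C.1 : Set X) = δ :=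
      frontier_le_subset_eq (continuous_infDist_pt _) continuous_const hyG
    exact hδ.ne (infDist_zero_of_mem hyC ▸ this)
  refine ⟨Z', ⟨lt_of_le_not_ge hCZ fun h => hyC (h hyZ),
    (connectedComponentIn_subset _ _).trans inter_subset_left⟩, ?_⟩
  refine (hausdorffDist_le_of_infDist hδ.le (fun z hz => ?_) fun z hz => ?_).trans_lt
    ((min_le_left _ _).trans_lt (half_lt_self hε))
  · exact (infDist_zero_of_mem (hCZ hz)).trans_le hδ.le
  · exact (connectedComponentIn_subset _ _ hz).2

variable {μ : Hyperspace X → ℝ} {t : ℝ}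

theorem exists_union_lt (hμ : Continuous μ) (hCA : C < A) (hCB : C < B) (hC : μ C < t) :
    ∃ A' ∈ Ioc C A, ∃ B' ∈ Ioc C B, ∃ h, μ (union A' B' h) < t := by
  obtain ⟨ε, hε, hball⟩ := Metric.isOpen_iff.1 (isOpen_lt hμ continuous_const) C hC
  obtain ⟨A', hA', hCA'⟩ := Metric.mem_closure_iff.1 (mem_closure_Ioc hCA) ε hε
  obtain ⟨B', hB', hCB'⟩ := Metric.mem_closure_iff.1 (mem_closure_Ioc hCB) ε hε
  obtain ⟨x, hx⟩ := C.1.nonempty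
  exact ⟨A', hA', B', hB', ⟨x, hA'.1.le hx, hB'.1.le hx⟩, hball <| mem_ball.2 <|
    dist_union_le.trans_lt <| max_lt (dist_comm C A' ▸ hCA') (dist_comm C B' ▸ hCB')⟩

section Whitney

variable [CompactSpace X]

theorem exists_mem_Icc_eq (hμ : Continuous μ) (hμ' : StrictMono μ) {K B : Hyperspace X}
    (hKB : K ≤ B) (hK : μ K ≤ t) (hB : t ≤ μ B) : ∃ E ∈ Icc K B, μ E = t := by
  have hS : IsCompact (Icc K B ∩ {E | μ E ≤ t}) :=
    (isClosed_Icc.inter (isClosed_le hμ continuous_const)).isCompact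
  obtain ⟨m, ⟨hm, hmt⟩, hmax⟩ := hS.exists_isMaxOn ⟨K, ⟨le_rfl, hKB⟩, hK⟩ hμ.continuousOn
  refine ⟨m, hm, hmt.antisymm (not_lt.1 fun hlt => ?_)⟩
  have hmB : m < B := hm.2.lt_of_ne (by rintro rfl; exact hlt.not_ge hB)
  obtain ⟨m', hm't, hmm', hm'B⟩ :=
    mem_closure_iff.1 (mem_closure_Ioc hmB) _ (isOpen_lt hμ continuous_const) hlt
  exact (hμ' hmm').not_ge
    (hmax ⟨⟨hm.1.trans hmm'.le, hm'B⟩, show μ m' ≤ t from le_of_lt hm't⟩)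

theorem isPreconnected_Icc_inter_preimage (hμ : Continuous μ) (hμ' : StrictMono μ)
    (K B : Hyperspace X) : IsPreconnected (Icc K B ∩ μ ⁻¹' {t}) := by
  set T := Icc K B ∩ μ ⁻¹' {t}
  have hT : IsClosed T := isClosed_Icc.inter (isClosed_singleton.preimage hμ)
  rw [isPreconnected_iff_subset_of_fully_disjoint_closed hT]
  intro u v hu hv hTuv huv
  by_contra! h
  obtain ⟨E₁, hE₁, hE₁u⟩ := not_subset.1 h.1
  obtain ⟨E₂, hE₂, hE₂v⟩ := not_subset.1 h.2
  set S := Ici K ∩ {C | μ C ≤ t} ∩ (lowerClosure (T ∩ u) ∩ lowerClosure (T ∩ v) : Set _)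
  have hS : IsCompact S := ((isClosed_Ici.inter (isClosed_le hμ continuous_const)).inter
    ((hT.inter hu).isCompact.isClosed_lowerClosure.inter
      (hT.inter hv).isCompact.isClosed_lowerClosure)).isCompact
  have hKS : K ∈ S := ⟨⟨self_mem_Ici, hE₁.2 ▸ hμ'.monotone hE₁.1.1⟩,
    ⟨E₂, ⟨hE₂, (hTuv hE₂).resolve_right hE₂v⟩, hE₂.1.1⟩,
    ⟨E₁, ⟨hE₁, (hTuv hE₁).resolve_left hE₁u⟩, hE₁.1.1⟩⟩
  -- a common lower bound `C` of `T ∩ u` and `T ∩ v` on which `μ` is maximal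
  obtain ⟨C, ⟨⟨hKC, -⟩, ⟨Eu, ⟨hEu, hEuu⟩, hCEu⟩, ⟨Ev, ⟨hEv, hEvv⟩, hCEv⟩⟩, hmax⟩ :=
    hS.exists_isMaxOn ⟨K, hKS⟩ hμ.continuousOn
  have hne : Eu ≠ Ev := fun h => disjoint_left.1 huv hEuu (h ▸ hEvv)
  have hCEu' : C < Eu := hCEu.lt_of_ne fun h =>
    hne (hμ'.eq_of_le_of_apply_eq (h.symm.trans_le hCEv) (hEu.2.trans hEv.2.symm))
  have hCEv' : C < Ev := hCEv.lt_of_ne fun h =>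
    hne (hμ'.eq_of_le_of_apply_eq (h.symm.trans_le hCEu) (hEv.2.trans hEu.2.symm)).symm
  obtain ⟨A', ⟨hCA', hA'Eu⟩, B', ⟨hCB', hB'Ev⟩, hA'B', hJ⟩ :=
    exists_union_lt hμ hCEu' hCEv' (hEu.2 ▸ hμ' hCEu')
  set J := union A' B' hA'B'
  obtain ⟨E, ⟨hJE, hEM⟩, hEt⟩ := exists_mem_Icc_eq hμ hμ'
    (union_le (hA'Eu.trans le_union_left) (hB'Ev.trans le_union_right)) hJ.le
    (hEu.2 ▸ hμ'.monotone (le_union_left (h := hA'B'.mono (inter_subset_inter hA'Eu hB'Ev))))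
  have hET : E ∈ T := ⟨⟨hKC.trans (hCA'.le.trans (le_union_left.trans hJE)),
    hEM.trans (union_le hEu.1.2 hEv.1.2)⟩, hEt⟩
  -- whichever part contains `E`, one of `A'`, `B'` lies in `S`, against the maximality of `C`
  rcases hTuv hET with hEu' | hEv'
  · exact (hμ' hCB').not_ge (hmax
      ⟨⟨hKC.trans hCB'.le, (hμ'.monotone le_union_right).trans hJ.le⟩,
        ⟨E, ⟨hET, hEu'⟩, le_union_right.trans hJE⟩, ⟨Ev, ⟨hEv, hEvv⟩, hB'Ev⟩⟩)
  · exact (hμ' hCA').not_ge (hmax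
      ⟨⟨hKC.trans hCA'.le, (hμ'.monotone le_union_left).trans hJ.le⟩,
        ⟨Eu, ⟨hEu, hEuu⟩, hA'Eu⟩, ⟨E, ⟨hET, hEv'⟩, le_union_left.trans hJE⟩⟩)

theorem isPreconnected_Iic_inter_preimage (hμ : Continuous μ) (hμ' : StrictMono μ)
    (hsing : ∀ x : X, μ {x} ≤ t) (B : Hyperspace X) : IsPreconnected (Iic B ∩ μ ⁻¹' {t}) := by
  set L := Iic B ∩ μ ⁻¹' {t}
  have hL : IsClosed L := isClosed_Iic.inter (isClosed_singleton.preimage hμ)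
  rw [isPreconnected_iff_subset_of_fully_disjoint_closed hL]
  intro u v hu hv hLuv huv
  have hfibre (x : X) : Icc {x} B ∩ μ ⁻¹' {t} ⊆ u ∨ Icc {x} B ∩ μ ⁻¹' {t} ⊆ v :=
    (isPreconnected_iff_subset_of_fully_disjoint_closed
      (isClosed_Icc.inter (isClosed_singleton.preimage hμ))).1
      (isPreconnected_Icc_inter_preimage hμ hμ' {x} B) u v hu hv
      (fun E hE => hLuv ⟨hE.1.2, hE.2⟩) huv
  by_contra! h
  obtain ⟨E₁, hE₁, hE₁u⟩ := not_subset.1 h.1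
  obtain ⟨E₂, hE₂, hE₂v⟩ := not_subset.1 h.2
  set Xu := (fun x : X => ({x} : Hyperspace X)) ⁻¹' lowerClosure (L ∩ u)
  set Xv := (fun x : X => ({x} : Hyperspace X)) ⁻¹' lowerClosure (L ∩ v)
  have hXu : IsClosed Xu :=
    (hL.inter hu).isCompact.isClosed_lowerClosure.preimage continuous_singleton
  have hXv : IsClosed Xv :=
    (hL.inter hv).isCompact.isClosed_lowerClosure.preimage continuous_singleton
  have hcover : (B.1 : Set X) ⊆ Xu ∪ Xv := by
    intro x hx
    obtain ⟨E, hE, hEt⟩ := exists_mem_Icc_eq hμ hμ' (singleton_le_iff.2 hx) (hsing x)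
      (hE₁.2 ▸ hμ'.monotone hE₁.1)
    rcases hLuv ⟨hE.2, hEt⟩ with hEu | hEv
    exacts [Or.inl ⟨E, ⟨⟨hE.2, hEt⟩, hEu⟩, hE.1⟩, Or.inr ⟨E, ⟨⟨hE.2, hEt⟩, hEv⟩, hE.1⟩]
  obtain ⟨x₁, hx₁⟩ := E₁.1.nonempty
  obtain ⟨x₂, hx₂⟩ := E₂.1.nonempty
  obtain ⟨x, -, ⟨Eu, ⟨hEu, hEuu⟩, hxEu⟩, ⟨Ev, ⟨hEv, hEvv⟩, hxEv⟩⟩ :=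
    isPreconnected_closed_iff.1 B.2.isPreconnected Xu Xv hXu hXv hcover
      ⟨x₂, hE₂.1 hx₂, E₂, ⟨hE₂, (hLuv hE₂).resolve_right hE₂v⟩, singleton_le_iff.2 hx₂⟩
      ⟨x₁, hE₁.1 hx₁, E₁, ⟨hE₁, (hLuv hE₁).resolve_left hE₁u⟩, singleton_le_iff.2 hx₁⟩
  rcases hfibre x with hxu | hxv
  · exact disjoint_left.1 huv (hxu ⟨⟨hxEv, hEv.1⟩, hEv.2⟩) hEvv
  · exact disjoint_left.1 huv hEuu (hxv ⟨⟨hxEu, hEu.1⟩, hEu.2⟩)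

variable {𝒜 ℬ 𝒞 : Hyperspace X}

theorem exists_isConnected_of_mem_inter (hμ : Continuous μ) (hμ' : StrictMono μ)
    (h𝒜 : μ 𝒜 = t) (hℬ : μ ℬ = t) {x : X} (hx𝒜 : x ∈ (𝒜.1 : Set X)) (hxℬ : x ∈ (ℬ.1 : Set X))
    (hx𝒞 : x ∉ (𝒞.1 : Set X)) :
    ∃ D ⊆ μ ⁻¹' {t}, IsCompact D ∧ IsConnected D ∧ 𝒜 ∈ D ∧ ℬ ∈ D ∧ 𝒞 ∉ D := by
  set M := union 𝒜 ℬ ⟨x, hx𝒜, hxℬ⟩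
  have h𝒜D : 𝒜 ∈ Icc {x} M ∩ μ ⁻¹' {t} := ⟨⟨singleton_le_iff.2 hx𝒜, le_union_left⟩, h𝒜⟩
  exact ⟨_, inter_subset_right, (isClosed_Icc.inter (isClosed_singleton.preimage hμ)).isCompact,
    ⟨⟨𝒜, h𝒜D⟩, isPreconnected_Icc_inter_preimage hμ hμ' _ _⟩, h𝒜D,
    ⟨⟨singleton_le_iff.2 hxℬ, le_union_right⟩, hℬ⟩, fun h => hx𝒞 (singleton_le_iff.1 h.1.1)⟩

theorem exists_isConnected_of_subset (hμ : Continuous μ) (hμ' : StrictMono μ)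
    (hsing : ∀ x : X, μ {x} ≤ t) (h𝒜 : μ 𝒜 = t) (hℬ : μ ℬ = t) {M : Set X} (hMc : IsCompact M)
    (hM : IsConnected M) (h𝒜M : (𝒜.1 : Set X) ⊆ M) (hℬM : (ℬ.1 : Set X) ⊆ M)
    (h𝒞M : ¬(𝒞.1 : Set X) ⊆ M) :
    ∃ D ⊆ μ ⁻¹' {t}, IsCompact D ∧ IsConnected D ∧ 𝒜 ∈ D ∧ ℬ ∈ D ∧ 𝒞 ∉ D := by
  let M' : Hyperspace X := ⟨⟨⟨M, hMc⟩, hM.nonempty⟩, hM⟩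
  have h𝒜D : 𝒜 ∈ Iic M' ∩ μ ⁻¹' {t} := ⟨h𝒜M, h𝒜⟩
  exact ⟨_, inter_subset_right, (isClosed_Iic.inter (isClosed_singleton.preimage hμ)).isCompact,
    ⟨⟨𝒜, h𝒜D⟩, isPreconnected_Iic_inter_preimage hμ hμ' hsing M'⟩, h𝒜D, ⟨hℬM, hℬ⟩,
    fun h => h𝒞M h.1⟩

theorem wilderSpace_preimage (hX : WilderSpace X) (hμ : Continuous μ) (hμ' : StrictMono μ)
    (hsing : ∀ x : X, μ {x} ≤ t) : WilderSpace (μ ⁻¹' {t}) := by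
  refine wilderSpace_subtype fun 𝒜 h𝒜 ℬ hℬ 𝒞 h𝒞 h𝒜ℬ hℬ𝒞 h𝒜𝒞 => ?_
  have hincomp {P Q : Hyperspace X} (hP : μ P = t) (hQ : μ Q = t) (hPQ : P ≠ Q) :
      ¬(P.1 : Set X) ⊆ Q.1 := fun h => hPQ (hμ'.eq_of_le_of_apply_eq h (hP.trans hQ.symm))
  by_cases h1 : (𝒞.1 : Set X) ⊆ 𝒜.1 ∪ ℬ.1
  · obtain ⟨c, hc𝒞, hcℬ⟩ := not_subset.1 (hincomp h𝒞 hℬ hℬ𝒞.symm)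
    obtain ⟨D, hD, hDc, hDconn, h𝒜D, h𝒞D, hℬD⟩ :=
      exists_isConnected_of_mem_inter hμ hμ' h𝒜 h𝒞 ((h1 hc𝒞).resolve_right hcℬ) hc𝒞 hcℬ
    exact ⟨D, hD, hDc, hDconn, h𝒜D, Or.inr ⟨h𝒞D, hℬD⟩⟩
  by_cases h2 : (ℬ.1 : Set X) ⊆ 𝒜.1 ∪ 𝒞.1
  · obtain ⟨b, hbℬ, hb𝒞⟩ := not_subset.1 (hincomp hℬ h𝒞 hℬ𝒞)
    obtain ⟨D, hD, hDc, hDconn, h𝒜D, hℬD, h𝒞D⟩ :=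
      exists_isConnected_of_mem_inter hμ hμ' h𝒜 hℬ ((h2 hbℬ).resolve_right hb𝒞) hbℬ hb𝒞
    exact ⟨D, hD, hDc, hDconn, h𝒜D, Or.inl ⟨hℬD, h𝒞D⟩⟩
  obtain ⟨b, hbℬ, hb⟩ := not_subset.1 h2
  obtain ⟨c, hc𝒞, hc⟩ := not_subset.1 h1
  simp only [mem_union, not_or] at hb hc
  obtain ⟨a, ha⟩ := 𝒜.1.nonempty
  obtain ⟨W, hWc, hW, haW, ⟨hbW, hcW⟩ | ⟨hcW, hbW⟩⟩ := hX a b c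
    (fun h => hb.1 (h ▸ ha)) (fun h => hc.2 (h ▸ hbℬ)) (fun h => hc.1 (h ▸ ha))
  · obtain ⟨D, hD, hDc, hDconn, h𝒜D, hℬD, h𝒞D⟩ :=
      exists_isConnected_of_subset hμ hμ' hsing h𝒜 hℬ
        ((𝒜.1.isCompact.union hWc).union ℬ.1.isCompact)
        ((𝒜.2.union ⟨a, ha, haW⟩ hW).union ⟨b, Or.inr hbW, hbℬ⟩ ℬ.2)
        (subset_union_left.trans subset_union_left) subset_union_right fun h => by
          rcases h hc𝒞 with (h | h) | h
          exacts [hc.1 h, hcW h, hc.2 h]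
    exact ⟨D, hD, hDc, hDconn, h𝒜D, Or.inl ⟨hℬD, h𝒞D⟩⟩
  · obtain ⟨D, hD, hDc, hDconn, h𝒜D, h𝒞D, hℬD⟩ :=
      exists_isConnected_of_subset hμ hμ' hsing h𝒜 h𝒞
        ((𝒜.1.isCompact.union hWc).union 𝒞.1.isCompact)
        ((𝒜.2.union ⟨a, ha, haW⟩ hW).union ⟨c, Or.inr hcW, hc𝒞⟩ 𝒞.2)
        (subset_union_left.trans subset_union_left) subset_union_right fun h => by
          rcases h hbℬ with (h | h) | h
          exacts [hb.1 h, hbW h, hb.2 h]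
    exact ⟨D, hD, hDc, hDconn, h𝒜D, Or.inr ⟨h𝒞D, hℬD⟩⟩

end Whitney

end Hyperspace

/-- Being Wilder is a Whitney property: every Whitney level of a Wilder continuum is a
Wilder continuum. -/
theorem wilder_whitney_property (X : Type*) [MetricSpace X] [CompactSpace X]
    [ConnectedSpace X] (hX : WilderSpace X)
    (μ : Hyperspace X → ℝ) (hμcont : Continuous μ)
    (hμ0 : ∀ A : Hyperspace X, (A.1 : Set X).Subsingleton → μ A = 0)
    (hμmono : ∀ A B : Hyperspace X, (A.1 : Set X) ⊂ (B.1 : Set X) → μ A < μ B)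
    (t : ℝ) (ht0 : 0 < t)
    (httop : t < μ ⟨⟨⟨Set.univ, isCompact_univ⟩, Set.univ_nonempty⟩, isConnected_univ⟩) :
    CompactSpace {A : Hyperspace X // μ A = t} ∧
      ConnectedSpace {A : Hyperspace X // μ A = t} ∧
      WilderSpace {A : Hyperspace X // μ A = t} := by
  have hμ' : StrictMono μ := fun A B h => hμmono A B h
  have hsing (x : X) : μ {x} ≤ t := (hμ0 {x} subsingleton_singleton).trans_le ht0.le
  obtain ⟨x⟩ : Nonempty X := inferInstance
  obtain ⟨E, -, hE⟩ := Hyperspace.exists_mem_Icc_eq hμcont hμ'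
    (le_top : ({x} : Hyperspace X) ≤ ⊤) (hsing x) httop.le
  refine ⟨isCompact_iff_compactSpace.1 (isClosed_singleton.preimage hμcont).isCompact,
    (isConnected_iff_connectedSpace (s := μ ⁻¹' {t})).1 ⟨⟨E, hE⟩, ?_⟩,
    Hyperspace.wilderSpace_preimage hX hμcont hμ' hsing⟩
  simpa using Hyperspace.isPreconnected_Iic_inter_preimage hμcont hμ' hsing ⊤
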